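/- arXiv:1508.03425 — 3 statements merged into one kernel-verified Lean document; each statement's English description precedes it below -/
import Mathlib

section
/- Let c be a positive natural number, let w be a Gauss word of length 2c, let x be an assignment, and let b : Fin (2c) be a base. Then the warping degree satisfies d_{b+1}(x) = d_b(x) + 1 if position b is passed over under x, and d_{b+1}(x) = d_b(x) − 1 if position b is passed under under x (indices taken mod 2c). -/
/-!
Moving the base from `b` to `b + 1` moves position `b` from the front to the back of the
traversal and keeps the relative order of all other positions. So only the letter `w b` can change
its status. At base `b` its earlier position is `b` itself, at base `b + 1` it is the other
position `k` of that letter, and `b`, `k` have opposite pass types. Hence `w b` is a warping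
crossing for exactly one of the two bases: for `b` if `b` is passed under, for `b + 1` otherwise.
-/

namespace Warping

/-- A Gauss word of length `2c`: every letter occurs at exactly two positions. -/
def IsGaussWord (c : ℕ) (w : Fin (2*c) → Fin c) : Prop :=
  ∀ i : Fin c, (Finset.univ.filter (fun j => w j = i)).card = 2

/-- The cyclic successor of an index. -/
def next {n : ℕ} (b : Fin n) : Fin n :=
  ⟨((b : ℕ) + 1) % n, Nat.mod_lt _ (Nat.lt_of_le_of_lt (Nat.zero_le _) b.isLt)⟩

/-- `j` is the first (smaller) of the two positions of its letter. -/
def isFirst (c : ℕ) (w : Fin (2*c) → Fin c) (j : Fin (2*c)) : Prop :=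
  ∀ j' : Fin (2*c), w j' = w j → j ≤ j'

/-- Under the assignment `x`, position `j` is passed under. -/
def passedUnder (c : ℕ) (w : Fin (2*c) → Fin c) (x : Fin c → Bool) (j : Fin (2*c)) : Prop :=
  (x (w j) = true) ↔ isFirst c w j

/-- Time at which position `j` is met in the cyclic traversal starting at base `b`. -/
def time (c : ℕ) (b j : Fin (2*c)) : ℕ := ((j : ℕ) + 2*c - (b : ℕ)) % (2*c)

/-- The letter `i` is a warping crossing for assignment `x` and base `b`: the position of `i`
met earlier in the cyclic traversal starting at `b` is passed under. -/
def IsWarpingCrossing (c : ℕ) (w : Fin (2*c) → Fin c) (x : Fin c → Bool)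
    (b : Fin (2*c)) (i : Fin c) : Prop :=
  ∃ j : Fin (2*c), w j = i ∧ (∀ j' : Fin (2*c), w j' = i → time c b j ≤ time c b j') ∧
    passedUnder c w x j

open scoped Classical in
/-- The warping degree of the assignment `x` with base point `b`. -/
noncomputable def warpingDegree (c : ℕ) (w : Fin (2*c) → Fin c) (x : Fin c → Bool)
    (b : Fin (2*c)) : ℕ :=
  (Finset.univ.filter (fun i => IsWarpingCrossing c w x b i)).card

/-- The step `d_{b+1}(x) - d_b(x)` of the warping degree sequence. -/
noncomputable def step (c : ℕ) (w : Fin (2*c) → Fin c) (x : Fin c → Bool) (b : Fin (2*c)) : ℤ :=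
  (warpingDegree c w x (next b) : ℤ) - (warpingDegree c w x b : ℤ)

section

variable {c : ℕ}

theorem time_eq (b j : Fin (2*c)) :
    time c b j = if (b : ℕ) ≤ j then (j : ℕ) - b else j + 2*c - b := by
  have := j.isLt
  unfold time
  split_ifs with h
  · rw [show (j : ℕ) + 2*c - b = (j - b) + 2*c by omega, Nat.add_mod_right,
      Nat.mod_eq_of_lt (by omega)]
  · exact Nat.mod_eq_of_lt (by omega)

theorem val_next (b : Fin (2*c)) :
    (next b : ℕ) = if (b : ℕ) + 1 < 2*c then (b : ℕ) + 1 else 0 := by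
  show ((b : ℕ) + 1) % (2*c) = _
  split_ifs with h
  · exact Nat.mod_eq_of_lt h
  · rw [show (b : ℕ) + 1 = 2*c by omega, Nat.mod_self]

theorem time_lt (b j : Fin (2*c)) : time c b j < 2*c :=
  Nat.mod_lt _ (by have := j.isLt; omega)

theorem time_self (b : Fin (2*c)) : time c b b = 0 := by
  simp [time_eq]

theorem time_pos {b j : Fin (2*c)} (h : j ≠ b) : 0 < time c b j := by
  have := Fin.val_ne_of_ne h
  rw [time_eq]
  split_ifs <;> omega

theorem time_next_add_one {b j : Fin (2*c)} (h : j ≠ b) :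
    time c (next b) j + 1 = time c b j := by
  have := Fin.val_ne_of_ne h
  have := j.isLt
  rw [time_eq, time_eq, val_next]
  split_ifs <;> omega

theorem time_next_self (b : Fin (2*c)) : time c (next b) b + 1 = 2*c := by
  have := b.isLt
  rw [time_eq, val_next]
  split_ifs <;> omega

def IsPartner (w : Fin (2*c) → Fin c) (j k : Fin (2*c)) : Prop :=
  k ≠ j ∧ w k = w j ∧ ∀ j', w j' = w j → j' = j ∨ j' = k

theorem IsGaussWord.exists_isPartner {w : Fin (2*c) → Fin c} (hw : IsGaussWord c w)
    (j : Fin (2*c)) : ∃ k, IsPartner w j k := by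
  obtain ⟨j₁, j₂, hne, hpos⟩ := Finset.card_eq_two.mp (hw (w j))
  have mem : ∀ j', w j' = w j ↔ j' = j₁ ∨ j' = j₂ := fun j' => by
    simpa using Finset.ext_iff.mp hpos j'
  rcases (mem j).mp rfl with rfl | rfl
  · exact ⟨j₂, hne.symm, (mem j₂).mpr (Or.inr rfl), fun j' => (mem j').mp⟩
  · exact ⟨j₁, hne, (mem j₁).mpr (Or.inl rfl), fun j' h => ((mem j').mp h).symm⟩

namespace IsPartner

variable {w : Fin (2*c) → Fin c} {j k : Fin (2*c)}

theorem symm (h : IsPartner w j k) : IsPartner w k j := by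
  obtain ⟨hne, hwk, hpos⟩ := h
  exact ⟨hne.symm, hwk.symm, fun j' hj' => (hpos j' (hj'.trans hwk)).symm⟩

theorem isFirst_iff (h : IsPartner w j k) : isFirst c w j ↔ j < k := by
  obtain ⟨hne, hwk, hpos⟩ := h
  refine ⟨fun hj => lt_of_le_of_ne (hj k hwk) hne.symm, fun hjk j' hj' => ?_⟩
  rcases hpos j' hj' with rfl | rfl
  exacts [le_rfl, hjk.le]

theorem passedUnder_iff_not (h : IsPartner w j k) (x : Fin c → Bool) :
    passedUnder c w x k ↔ ¬ passedUnder c w x j := by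
  have hlt : k < j ↔ ¬ j < k := ⟨lt_asymm, fun hkj => lt_of_le_of_ne (not_lt.mp hkj) h.1⟩
  unfold passedUnder
  rw [h.2.1, h.isFirst_iff, h.symm.isFirst_iff, hlt]
  tauto

end IsPartner

variable {w : Fin (2*c) → Fin c}

theorem isWarpingCrossing_iff_of_forall_time_lt (x : Fin c → Bool) {b j : Fin (2*c)}
    {i : Fin c} (hj : w j = i) (hlt : ∀ j', w j' = i → j' ≠ j → time c b j < time c b j') :
    IsWarpingCrossing c w x b i ↔ passedUnder c w x j := by
  refine ⟨fun ⟨j', hj', hmin, hpu⟩ => ?_, fun hpu => ⟨j, hj, fun j' hj' => ?_, hpu⟩⟩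
  · obtain rfl | hne := eq_or_ne j' j
    · exact hpu
    · exact absurd (hmin j hj) (hlt j' hj' hne).not_ge
  · obtain rfl | hne := eq_or_ne j' j
    · exact le_rfl
    · exact (hlt j' hj' hne).le

theorem isWarpingCrossing_self_iff (x : Fin c → Bool) (b : Fin (2*c)) :
    IsWarpingCrossing c w x b (w b) ↔ passedUnder c w x b :=
  isWarpingCrossing_iff_of_forall_time_lt x rfl fun _ _ hne => time_self b ▸ time_pos hne

theorem IsPartner.isWarpingCrossing_next_iff {b k : Fin (2*c)} (h : IsPartner w b k)
    (x : Fin c → Bool) : IsWarpingCrossing c w x (next b) (w b) ↔ passedUnder c w x k := by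
  refine isWarpingCrossing_iff_of_forall_time_lt x h.2.1 fun j' hj' hne => ?_
  obtain rfl : j' = b := (h.2.2 j' hj').resolve_right hne
  have hk := time_next_add_one (c := c) h.1
  have hk_lt := time_lt j' k
  have hb := time_next_self j'
  omega

theorem isWarpingCrossing_next_iff_of_ne (x : Fin c → Bool) {b : Fin (2*c)} {i : Fin c}
    (hi : i ≠ w b) : IsWarpingCrossing c w x (next b) i ↔ IsWarpingCrossing c w x b i := by
  have hb : ∀ j, w j = i → j ≠ b := by
    rintro j hj rfl
    exact hi hj.symm
  refine exists_congr fun j => and_congr_right fun hj => and_congr_left fun _ =>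
    forall_congr' fun j' => imp_congr_right fun hj' => ?_
  rw [← time_next_add_one (hb j hj), ← time_next_add_one (hb j' hj'), Nat.add_le_add_iff_right]

open scoped Classical in
theorem step_eq (x : Fin c → Bool) (b : Fin (2*c)) :
    step c w x b = (if IsWarpingCrossing c w x (next b) (w b) then 1 else 0) -
      (if IsWarpingCrossing c w x b (w b) then 1 else 0) := by
  rw [step, warpingDegree, warpingDegree, Finset.natCast_card_filter, Finset.natCast_card_filter,
    ← Finset.sum_sub_distrib]
  refine Finset.sum_eq_single (w b) (fun i _ hi => ?_) (by simp)
  rw [isWarpingCrossing_next_iff_of_ne x hi, sub_self]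

end

theorem warpingDegree_next_general (c : ℕ) (w : Fin (2*c) → Fin c)
    (hw : IsGaussWord c w) (x : Fin c → Bool) (b : Fin (2*c)) :
    (¬ passedUnder c w x b →
      (warpingDegree c w x (next b) : ℤ) = (warpingDegree c w x b : ℤ) + 1) ∧
    (passedUnder c w x b →
      (warpingDegree c w x (next b) : ℤ) = (warpingDegree c w x b : ℤ) - 1) := by
  classical
  obtain ⟨k, hk⟩ := hw.exists_isPartner b
  have hstep := step_eq (w := w) x b
  rw [hk.isWarpingCrossing_next_iff, isWarpingCrossing_self_iff, hk.passedUnder_iff_not, step]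
    at hstep
  constructor <;> intro h <;> simp only [h, if_true, if_false, not_true, not_false_eq_true] at hstep
    <;> linarith

/-- Lemma 2.5 of Shimizu: passing an overcrossing increases the warping degree by one,
passing an undercrossing decreases it by one. -/
theorem warpingDegree_next (c : ℕ) (hc : 0 < c) (w : Fin (2*c) → Fin c)
    (hw : IsGaussWord c w) (x : Fin c → Bool) (b : Fin (2*c)) :
    (¬ passedUnder c w x b →
      (warpingDegree c w x (next b) : ℤ) = (warpingDegree c w x b : ℤ) + 1) ∧
    (passedUnder c w x b →
      (warpingDegree c w x (next b) : ℤ) = (warpingDegree c w x b : ℤ) - 1) :=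
  warpingDegree_next_general c w hw x b

end Warping
end

section
/- Let c be a natural number and let w be a Gauss word of length 2c. Then for every base b : Fin (2c) and every natural number n, the number of assignments x : Fin c → Bool with d_b(x) = n equals the binomial coefficient (c choose n). This is property (ii) of the warping matrix: in each column, the value n appears exactly (c choose n) times. -/
namespace Warping

/-!
Fix the base `b`. The position of a letter `i` met first from `b` depends only on `w` and `b`,
and whether it is passed under depends only on `x i`; so there is `t : Fin c → Bool` with
`d_b(x) = #{i | x i = t i}`. The map `x ↦ {i | x i = t i}` is a bijection onto the subsets of
`Fin c`, hence exactly `c.choose n` assignments have `d_b(x) = n`.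
-/

open Finset

def agreementEquiv {ι : Type*} [Fintype ι] [DecidableEq ι] (t : ι → Bool) :
    (ι → Bool) ≃ Finset ι where
  toFun x := {i | x i = t i}
  invFun s i := if i ∈ s then t i else !t i
  left_inv x := by
    funext i
    cases hx : x i <;> cases t i <;> simp [hx]
  right_inv s := by
    ext i
    by_cases h : i ∈ s <;> simp [h]

theorem card_filter_card_agree_eq_choose {ι : Type*} [Fintype ι] [DecidableEq ι]
    (t : ι → Bool) (n : ℕ) :
    #{x : ι → Bool | #{i | x i = t i} = n} = (Fintype.card ι).choose n :=
  calc #{x : ι → Bool | #{i | x i = t i} = n}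
      = Fintype.card {x : ι → Bool // #{i | x i = t i} = n} := (Fintype.card_subtype _).symm
    _ = Fintype.card {s : Finset ι // #s = n} :=
        Fintype.card_congr ((agreementEquiv t).subtypeEquiv fun _ => Iff.rfl)
    _ = (Fintype.card ι).choose n := Fintype.card_finset_len n

theorem IsGaussWord.exists_eq {c : ℕ} {w : Fin (2*c) → Fin c} (hw : IsGaussWord c w)
    (i : Fin c) : ∃ j, w j = i := by
  obtain ⟨j, hj⟩ := Finset.card_pos.mp (hw i ▸ two_pos)
  exact ⟨j, (mem_filter.mp hj).2⟩

theorem time_eq_val_sub (c : ℕ) (b j : Fin (2*c)) : time c b j = ((j - b : Fin (2*c)) : ℕ) := by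
  rw [time, Fin.val_sub]
  congr 1
  omega

theorem time_injective (c : ℕ) (b : Fin (2*c)) : Function.Injective (time c b) := by
  have : NeZero (2*c) := ⟨b.pos.ne'⟩
  intro j j' h
  rw [time_eq_val_sub, time_eq_val_sub] at h
  exact sub_left_injective (Fin.ext h)

open scoped Classical in
theorem passedUnder_iff {c : ℕ} (w : Fin (2*c) → Fin c) (x : Fin c → Bool) (j : Fin (2*c)) :
    passedUnder c w x j ↔ x (w j) = decide (isFirst c w j) := by
  by_cases h : isFirst c w j <;> simp [passedUnder, h]

theorem isWarpingCrossing_iff_passedUnder {c : ℕ} {w : Fin (2*c) → Fin c} {b j : Fin (2*c)}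
    (hmin : ∀ j', w j' = w j → time c b j ≤ time c b j') (x : Fin c → Bool) :
    IsWarpingCrossing c w x b (w j) ↔ passedUnder c w x j := by
  constructor
  · rintro ⟨j', hj', hmin', hpu⟩
    rwa [← time_injective c b ((hmin' j rfl).antisymm (hmin j' hj'))]
  · exact fun hpu => ⟨j, rfl, hmin, hpu⟩

theorem exists_isWarpingCrossing_iff {c : ℕ} {w : Fin (2*c) → Fin c} (b : Fin (2*c)) {i : Fin c}
    (hi : ∃ j, w j = i) : ∃ t : Bool, ∀ x, IsWarpingCrossing c w x b i ↔ x i = t := by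
  obtain ⟨j, hj, hmin⟩ := (univ.filter (w · = i)).exists_min_image (time c b)
    (let ⟨j, hj⟩ := hi; ⟨j, by simpa using hj⟩)
  obtain ⟨-, rfl⟩ := mem_filter.mp hj
  exact ⟨_, fun x => (isWarpingCrossing_iff_passedUnder
    (fun j' hj' => hmin j' (by simpa using hj')) x).trans (passedUnder_iff w x j)⟩

open scoped Classical in
/-- Property (ii) of the warping matrix: in each column, the value `n` appears exactly
`c.choose n` times. -/
theorem card_warpingDegree_eq_choose (c : ℕ) (w : Fin (2*c) → Fin c)
    (hw : IsGaussWord c w) :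
    ∀ b : Fin (2*c), ∀ n : ℕ,
      ((Finset.univ : Finset (Fin c → Bool)).filter
        (fun x => warpingDegree c w x b = n)).card = Nat.choose c n := by
  intro b n
  choose t ht using fun i => exists_isWarpingCrossing_iff b (hw.exists_eq i)
  have hdeg : ∀ x, warpingDegree c w x b = #{i | x i = t i} :=
    fun x => congrArg card (filter_congr fun i _ => ht i x)
  simpa [hdeg] using card_filter_card_agree_eq_choose t n

end Warping
end

section
/- Every 8 × 6 matrix M : Fin 8 → Fin 6 → ℕ satisfying the warping-matrix rules for c = 3 is equivalent, up to a permutation of rows, a cyclic permutation of columns, and possibly reversing the cyclic order of columns, to exactly one of the following three matrices: the matrix with rows (0,1,2,3,2,1), (1,0,1,2,3,2), (1,2,1,2,1,2), (1,2,3,2,1,0), (2,1,0,1,2,3), (2,1,2,1,2,1), (2,3,2,1,0,1), (3,2,1,0,1,2); the matrix with rows (0,1,2,3,2,1), (1,0,1,2,1,0), (1,2,1,2,1,2), (1,2,3,2,3,2), (2,1,0,1,0,1), (2,3,2,1,2,3), (2,1,2,1,2,1), (3,2,1,0,1,2); or the matrix with rows (0,1,2,1,2,1), (1,0,1,0,1,0),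 (1,2,1,2,3,2), (1,2,3,2,1,2), (2,1,0,1,2,1), (2,3,2,3,2,3), (2,1,2,1,0,1), (3,2,1,2,1,2). -/
namespace Warping

/-- Cyclic shift of the columns by `t`. -/
def colShift (c : ℕ) (t : ℕ) (j : Fin (2*c)) : Fin (2*c) :=
  ⟨((j : ℕ) + t) % (2*c), Nat.mod_lt _ (Nat.lt_of_le_of_lt (Nat.zero_le _) j.isLt)⟩

/-- Reversal of the cyclic order of the columns (composed with a cyclic shift by `t`). -/
def colRev (c : ℕ) (t : ℕ) (j : Fin (2*c)) : Fin (2*c) :=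
  ⟨(t + 2*c - (j : ℕ)) % (2*c), Nat.mod_lt _ (Nat.lt_of_le_of_lt (Nat.zero_le _) j.isLt)⟩

/-- A row of one of the alternating forms `(k, k+1, k, k+1, …, k+1)` or
`(l, l-1, l, l-1, …, l-1)`. -/
def AltRow (c : ℕ) (r : Fin (2*c) → ℕ) : Prop :=
  (∃ k : ℕ, ∀ j : Fin (2*c), (r j : ℤ) = k + (j : ℕ) % 2) ∨
  (∃ l : ℕ, ∀ j : Fin (2*c), (r j : ℤ) = l - (j : ℕ) % 2)

/-- The warping-matrix rules (i)–(iv) for a `2^c × 2c` matrix: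
(i) cyclically consecutive entries of every row differ by exactly one;
(ii) in each column the value `n` appears exactly `c.choose n` times;
(iii) there is a unique partition of the `2^c` rows into `2^(c-1)` disjoint pairs such that
the two rows of each pair sum entrywise to the constant row `(c, c, …, c)`;
(iv) there are exactly two rows of the alternating forms `(k, k+1, k, k+1, …)` and
`(l, l-1, l, l-1, …)`, and for these `k + l = c`. -/
def WarpingRules (c : ℕ) (M : Fin (2^c) → Fin (2*c) → ℕ) : Prop :=
  (∀ i j, |(M i (next j) : ℤ) - (M i j : ℤ)| = 1) ∧
  (∀ j : Fin (2*c), ∀ n : ℕ, n ≤ c →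
      (Finset.univ.filter (fun i => M i j = n)).card = Nat.choose c n) ∧
  (∃! P : Finset (Finset (Fin (2^c))),
      P.card = 2^(c-1) ∧ (∀ p ∈ P, p.card = 2) ∧
      (∀ i : Fin (2^c), ∃! p, p ∈ P ∧ i ∈ p) ∧
      (∀ p ∈ P, ∀ i ∈ p, ∀ i' ∈ p, i ≠ i' → ∀ j, M i j + M i' j = c)) ∧
  (∃ i₀ i₁ : Fin (2^c), ∃ k l : ℕ, i₀ ≠ i₁ ∧ k + l = c ∧
      (∀ j : Fin (2*c), (M i₀ j : ℤ) = k + (j : ℕ) % 2) ∧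
      (∀ j : Fin (2*c), (M i₁ j : ℤ) = l - (j : ℕ) % 2) ∧
      (∀ i, AltRow c (M i) → i = i₀ ∨ i = i₁))

/-- Equivalence of `2^c × 2c` matrices up to a permutation of rows, a cyclic permutation of
columns, and possibly reversing the cyclic order of the columns. -/
def MatEquiv (c : ℕ) (M N : Fin (2^c) → Fin (2*c) → ℕ) : Prop :=
  ∃ σ : Equiv.Perm (Fin (2^c)), ∃ t : ℕ,
    (∀ i j, M i j = N (σ i) (colShift c t j)) ∨ (∀ i j, M i j = N (σ i) (colRev c t j))


/-- The first of the three warping matrices for `c = 3`. -/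
def mat3A : Fin (2^3) → Fin (2*3) → ℕ :=
  ![![0,1,2,3,2,1], ![1,0,1,2,3,2], ![1,2,1,2,1,2], ![1,2,3,2,1,0],
    ![2,1,0,1,2,3], ![2,1,2,1,2,1], ![2,3,2,1,0,1], ![3,2,1,0,1,2]]

/-- The second of the three warping matrices for `c = 3`. -/
def mat3B : Fin (2^3) → Fin (2*3) → ℕ :=
  ![![0,1,2,3,2,1], ![1,0,1,2,1,0], ![1,2,1,2,1,2], ![1,2,3,2,3,2],
    ![2,1,0,1,0,1], ![2,3,2,1,2,3], ![2,1,2,1,2,1], ![3,2,1,0,1,2]]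

/-- The third of the three warping matrices for `c = 3`. -/
def mat3C : Fin (2^3) → Fin (2*3) → ℕ :=
  ![![0,1,2,1,2,1], ![1,0,1,0,1,0], ![1,2,1,2,3,2], ![1,2,3,2,1,2],
    ![2,1,0,1,2,1], ![2,3,2,3,2,3], ![2,1,2,1,0,1], ![3,2,1,2,1,2]]


/-!
By rule (ii) every entry lies in `{0, 1, 2, 3}`, so by rule (i) every row is a closed walk of
length 6 on the path `0 - 1 - 2 - 3`; we encode a row by the number whose base-4 digits are its
entries. A matrix is determined up to a permutation of its rows by the multiset of its eight row
codes. The pairing of rule (iii) makes this multiset invariant under `x ↦ 4095 - x` (complementing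
every entry), so it is determined by its four codes below `4095 / 2`. A pruned search by `decide`
over the nondecreasing quadruples of such codes, constrained by the column counts of rule (ii) and
the two alternating rows of rule (iv), shows that the multiset is that of a rotation or reflection
of the columns of one of `mat3A`, `mat3B`, `mat3C`; the code multisets of the twelve column
images of any two of these three matrices are distinct.
-/

open Finset

section General

variable {c : ℕ} {M : Fin (2^c) → Fin (2*c) → ℕ}

theorem WarpingRules.entry_le (hM : WarpingRules c M) (i : Fin (2^c)) (j : Fin (2*c)) :
    M i j ≤ c := by
  set S := (range (c + 1)).biUnion fun n => ({i | M i j = n} : Finset (Fin (2^c)))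
  have hS : #S = 2 ^ c := by
    rw [card_biUnion fun n _ n' _ hnn' => disjoint_filter.2 fun i _ h h' => hnn' (h.symm.trans h'),
      sum_congr rfl fun n hn => hM.2.1 j n (Nat.lt_succ_iff.1 (mem_range.1 hn)),
      Nat.sum_range_choose]
  have hi : i ∈ S := by
    rw [eq_univ_of_card S (by simpa using hS)]
    exact mem_univ i
  simp only [S, mem_biUnion, mem_range, mem_filter] at hi
  obtain ⟨n, hn, -, rfl⟩ := hi
  omega

theorem WarpingRules.succ_or_pred (hM : WarpingRules c M) (i : Fin (2^c)) (j : Fin (2*c)) :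
    M i (next j) = M i j + 1 ∨ M i j = M i (next j) + 1 := by
  have h := hM.1 i j
  rw [abs_eq zero_le_one] at h
  omega

theorem exists_perm_partner {α : Type*} [DecidableEq α] {P : Finset (Finset α)}
    (hcard : ∀ p ∈ P, #p = 2) (hcover : ∀ a, ∃! p, p ∈ P ∧ a ∈ p) :
    ∃ τ : Equiv.Perm α, ∀ a, ∃ p ∈ P, a ∈ p ∧ τ a ∈ p ∧ τ a ≠ a := by
  choose p hp hpu using hcover
  have hpartner a : ∃ b ∈ p a, b ≠ a := exists_mem_ne (by rw [hcard _ (hp a).1]; norm_num) a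
  choose τ hτp hτne using hpartner
  have hpτ a : p (τ a) = p a := (hpu (τ a) (p a) ⟨(hp a).1, hτp a⟩).symm
  have hpair a : p a = {a, τ a} :=
    (eq_of_subset_of_card_le (insert_subset (hp a).2 (singleton_subset_iff.2 (hτp a)))
      (by rw [hcard _ (hp a).1, card_pair (hτne a).symm])).symm
  have hinv : Function.Involutive τ := fun a => by
    have h := hτp (τ a)
    rw [hpτ, hpair, mem_insert, mem_singleton] at h
    exact h.resolve_right (hτne (τ a))
  exact ⟨hinv.toPerm, fun a => ⟨p a, (hp a).1, (hp a).2, hτp a, hτne a⟩⟩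

theorem WarpingRules.exists_perm_add_eq (hM : WarpingRules c M) :
    ∃ τ : Equiv.Perm (Fin (2^c)), ∀ i j, M i j + M (τ i) j = c := by
  obtain ⟨P, ⟨-, hcard, hcover, hsum⟩, -⟩ := hM.2.2.1
  obtain ⟨τ, hτ⟩ := exists_perm_partner hcard hcover
  refine ⟨τ, fun i j => ?_⟩
  obtain ⟨p, hp, hi, hτi, hne⟩ := hτ i
  exact hsum p hp i hi (τ i) hτi hne.symm j

end General

theorem exists_perm_eq_comp_of_map_univ_eq {α β : Type*} [Fintype α] [DecidableEq β]
    {f g : α → β} (h : univ.val.map f = univ.val.map g) :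
    ∃ σ : Equiv.Perm α, ∀ a, f a = g (σ a) := by
  have hfiber b : Fintype.card {a // f a = b} = Fintype.card {a // g a = b} := by
    simpa [Fintype.card_subtype, Multiset.count_map, eq_comm, card_def] using
      congrArg (Multiset.count b) h
  exact ⟨Equiv.ofFiberEquiv fun b => Fintype.equivOfCardEq (hfiber b),
    fun a => (Equiv.ofFiberEquiv_map _ a).symm⟩

theorem eq_filter_add_map_sub {K : ℕ} {s : Multiset ℕ} (hK : K % 2 = 1) (hle : ∀ x ∈ s, x ≤ K)
    (hs : s.map (K - ·) = s) :
    s = s.filter (2 * · < K) + (s.filter (2 * · < K)).map (K - ·) := by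
  conv_lhs => rw [← Multiset.filter_add_not (2 * · < K) s]
  congr 1
  conv_lhs => rw [← hs]
  rw [Multiset.filter_map]
  refine congrArg _ (Multiset.filter_congr fun x hx => ?_)
  have := hle x hx
  simp only [Function.comp]
  omega

def rowCode (r : Fin (2*3) → ℕ) : ℕ := ∑ j, r j * 4 ^ (j : ℕ)

def digit (x j : ℕ) : ℕ := x / 4 ^ j % 4

section RowCode

variable {r r' : Fin (2*3) → ℕ}

theorem rowCode_eq (r : Fin (2*3) → ℕ) :
    rowCode r = r 0 + r 1 * 4 + r 2 * 16 + r 3 * 64 + r 4 * 256 + r 5 * 1024 := by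
  rw [rowCode, Fin.sum_univ_six]
  norm_num

theorem digit_rowCode (hr : ∀ j, r j ≤ 3) (j : Fin (2*3)) : digit (rowCode r) j = r j := by
  have := hr 0; have := hr 1; have := hr 2; have := hr 3; have := hr 4; have := hr 5
  rw [rowCode_eq, digit]
  fin_cases j <;>
    simp only [Fin.isValue, pow_zero, pow_one, Nat.div_one, Nat.reducePow, Nat.reduceMul,
      Fin.zero_eta, Fin.mk_one, Fin.reduceFinMk] <;>
    omega

theorem rowCode_lt (hr : ∀ j, r j ≤ 3) : rowCode r < 4096 := by
  have := hr 0; have := hr 1; have := hr 2; have := hr 3; have := hr 4; have := hr 5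
  rw [rowCode_eq]
  omega

theorem rowCode_add_rowCode (h : ∀ j, r j + r' j = 3) : rowCode r + rowCode r' = 4095 := by
  rw [rowCode, rowCode, ← sum_add_distrib]
  simp_rw [← add_mul, h]
  rfl

theorem eq_of_rowCode_eq (hr : ∀ j, r j ≤ 3) (hr' : ∀ j, r' j ≤ 3) (h : rowCode r = rowCode r') :
    r = r' :=
  funext fun j => by rw [← digit_rowCode hr j, ← digit_rowCode hr' j, h]

end RowCode

def IsWalkCode (x : ℕ) : Prop :=
  ∀ j < 6, digit x ((j + 1) % 6) = digit x j + 1 ∨ digit x j = digit x ((j + 1) % 6) + 1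

instance : DecidablePred IsWalkCode := fun x => by unfold IsWalkCode; infer_instance

def walkCodes : List ℕ := (List.range 4096).filter (IsWalkCode ·)

def lowCodes : List ℕ := walkCodes.filter (2 * · < 4095)

theorem rowCode_mem_walkCodes {r : Fin (2*3) → ℕ} (hr : ∀ j, r j ≤ 3)
    (hadj : ∀ j, r (next j) = r j + 1 ∨ r j = r (next j) + 1) : rowCode r ∈ walkCodes := by
  simp only [walkCodes, List.mem_filter, List.mem_range, decide_eq_true_eq]
  refine ⟨rowCode_lt hr, fun j hj => ?_⟩
  have hnext : digit (rowCode r) ((j + 1) % 6) = r (next ⟨j, hj⟩) :=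
    digit_rowCode hr (next ⟨j, hj⟩)
  rw [hnext, digit_rowCode hr ⟨j, hj⟩]
  exact hadj ⟨j, hj⟩

def codes (M : Fin (2^3) → Fin (2*3) → ℕ) : Multiset ℕ := univ.val.map fun i => rowCode (M i)

def colImages (N : Fin (2^3) → Fin (2*3) → ℕ) : List (Fin (2^3) → Fin (2*3) → ℕ) :=
  (List.range 6).map (fun t i j => N i (colShift 3 t j)) ++
    (List.range 6).map (fun t i j => N i (colRev 3 t j))

def orbitCodes (N : Fin (2^3) → Fin (2*3) → ℕ) : List (Multiset ℕ) := (colImages N).map codes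

section Codes

variable {M N : Fin (2^3) → Fin (2*3) → ℕ}

theorem codes_eq_of_perm (σ : Equiv.Perm (Fin (2^3))) (h : ∀ i, M i = N (σ i)) :
    codes M = codes N := by
  conv_rhs => rw [codes, ← Multiset.map_univ_val_equiv σ, Multiset.map_map]
  exact Multiset.map_congr rfl fun i _ => by simp [h]

theorem exists_perm_of_codes_eq (hM : ∀ i j, M i j ≤ 3) (hN : ∀ i j, N i j ≤ 3)
    (h : codes M = codes N) : ∃ σ : Equiv.Perm (Fin (2^3)), ∀ i, M i = N (σ i) := by
  refine exists_perm_eq_comp_of_map_univ_eq ?_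
  have hdecode (A : Fin (2^3) → Fin (2*3) → ℕ) (hA : ∀ i j, A i j ≤ 3) :
      (codes A).map (fun x (j : Fin (2*3)) => digit x j) = univ.val.map A := by
    rw [codes, Multiset.map_map]
    exact Multiset.map_congr rfl fun i _ => funext (digit_rowCode (hA i))
  rw [← hdecode M hM, ← hdecode N hN, h]

theorem colShift_mod (t : ℕ) : colShift 3 (t % 6) = colShift 3 t := by
  funext j
  simp only [colShift, Fin.ext_iff]
  omega

theorem colRev_mod (t : ℕ) : colRev 3 (t % 6) = colRev 3 t := by
  funext j
  have := j.isLt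
  simp only [colRev, Fin.ext_iff]
  omega

theorem codes_mem_orbitCodes_of_matEquiv (h : MatEquiv 3 M N) : codes M ∈ orbitCodes N := by
  obtain ⟨σ, t, h | h⟩ := h
  · rw [codes_eq_of_perm σ (N := fun i j => N i (colShift 3 (t % 6) j))
      fun i => funext fun j => by rw [h, colShift_mod]]
    exact List.mem_map_of_mem (List.mem_append_left _
      (List.mem_map_of_mem (List.mem_range.2 (Nat.mod_lt _ (by norm_num)))))
  · rw [codes_eq_of_perm σ (N := fun i j => N i (colRev 3 (t % 6) j))
      fun i => funext fun j => by rw [h, colRev_mod]]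
    exact List.mem_map_of_mem (List.mem_append_right _
      (List.mem_map_of_mem (List.mem_range.2 (Nat.mod_lt _ (by norm_num)))))

theorem matEquiv_of_codes_mem_orbitCodes (hM : ∀ i j, M i j ≤ 3) (hN : ∀ i j, N i j ≤ 3)
    (h : codes M ∈ orbitCodes N) : MatEquiv 3 M N := by
  simp only [orbitCodes, colImages, List.map_append, List.map_map, List.mem_append,
    List.mem_map, Function.comp] at h
  rcases h with ⟨t, -, ht⟩ | ⟨t, -, ht⟩
  · obtain ⟨σ, hσ⟩ := exists_perm_of_codes_eq hM (fun i j => hN i _) ht.symm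
    exact ⟨σ, t, Or.inl fun i j => congrFun (hσ i) j⟩
  · obtain ⟨σ, hσ⟩ := exists_perm_of_codes_eq hM (fun i j => hN i _) ht.symm
    exact ⟨σ, t, Or.inr fun i j => congrFun (hσ i) j⟩

end Codes

def withComplements (L : List ℕ) : List ℕ := L ++ L.map (4095 - ·)

theorem withComplements_sublist_append (L₁ L₂ : List ℕ) :
    (withComplements L₁).Sublist (withComplements (L₁ ++ L₂)) := by
  rw [withComplements, withComplements, List.map_append]
  exact (List.sublist_append_left L₁ L₂).append (List.sublist_append_left _ _)

def ColumnCountsLE (l : List ℕ) : Prop :=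
  ∀ j < 6, ∀ n < 4, l.countP (digit · j = n) ≤ Nat.choose 3 n

instance (l : List ℕ) : Decidable (ColumnCountsLE l) := by unfold ColumnCountsLE; infer_instance

theorem ColumnCountsLE.mono {l₁ l₂ : List ℕ} (h : ColumnCountsLE l₂) (hl : l₁.Sublist l₂) :
    ColumnCountsLE l₁ :=
  fun j hj n hn => (hl.countP_le).trans (h j hj n hn)

def altCodes : List ℕ :=
  (List.range 3).flatMap fun k => [rowCode fun j => k + j % 2, rowCode fun j => k + 1 - j % 2]

theorem rowCode_mem_altCodes_iff {r : Fin (2*3) → ℕ} (hr : ∀ j, r j ≤ 3) :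
    rowCode r ∈ altCodes ↔ AltRow 3 r := by
  simp only [altCodes, List.mem_flatMap, List.mem_range, List.mem_cons, List.not_mem_nil,
    or_false]
  constructor
  · rintro ⟨k, hk, h | h⟩
    · have hr' := eq_of_rowCode_eq hr (fun j => by omega) h
      exact Or.inl ⟨k, fun j => by rw [hr']; push_cast; rfl⟩
    · have hr' := eq_of_rowCode_eq hr (fun j => by omega) h
      exact Or.inr ⟨k + 1, fun j => by simp only [hr']; omega⟩
  · rintro (⟨k, hk⟩ | ⟨l, hl⟩)
    · have h₁ : (r ⟨1, by norm_num⟩ : ℤ) = k + 1 := by simpa using hk ⟨1, by norm_num⟩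
      have := hr ⟨1, by norm_num⟩
      exact ⟨k, by omega, Or.inl (congrArg rowCode (funext fun j => by have := hk j; omega))⟩
    · have h₀ : (r ⟨0, by norm_num⟩ : ℤ) = l := by simpa using hl ⟨0, by norm_num⟩
      have h₁ : (r ⟨1, by norm_num⟩ : ℤ) = l - 1 := by simpa using hl ⟨1, by norm_num⟩
      have := hr ⟨0, by norm_num⟩
      exact ⟨l - 1, by omega,
        Or.inr (congrArg rowCode (funext fun j => by have := hl j; omega))⟩

section Warping3

variable {M : Fin (2^3) → Fin (2*3) → ℕ}

theorem WarpingRules.map_sub_codes (hM : WarpingRules 3 M) :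
    (codes M).map (4095 - ·) = codes M := by
  obtain ⟨τ, hτ⟩ := hM.exists_perm_add_eq
  calc (codes M).map (4095 - ·) = codes fun i => M (τ i) := by
        simp only [codes, Multiset.map_map]
        refine Multiset.map_congr rfl fun i _ => ?_
        have := rowCode_add_rowCode (hτ i)
        simp only [Function.comp]
        omega
    _ = codes M := codes_eq_of_perm τ fun _ => rfl

theorem WarpingRules.exists_codes_eq_withComplements (hM : WarpingRules 3 M) :
    ∃ a b c d, a ∈ lowCodes ∧ b ∈ lowCodes ∧ c ∈ lowCodes ∧ d ∈ lowCodes ∧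
      a ≤ b ∧ b ≤ c ∧ c ≤ d ∧ codes M = ↑(withComplements [a, b, c, d]) := by
  have hwalk : ∀ x ∈ codes M, x ∈ walkCodes := by
    simp only [codes, Multiset.mem_map]
    rintro _ ⟨i, -, rfl⟩
    exact rowCode_mem_walkCodes (hM.entry_le i) (hM.succ_or_pred i)
  have hle x (hx : x ∈ codes M) : x ≤ 4095 := by
    have := hwalk x hx
    simp only [walkCodes, List.mem_filter, List.mem_range] at this
    omega
  set L := (codes M).filter (2 * · < 4095)
  have hsplit : codes M = L + L.map (4095 - ·) := eq_filter_add_map_sub rfl hle hM.map_sub_codes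
  have hcard : (L.sort).length = 4 := by
    have := congrArg Multiset.card hsplit
    simp only [codes, Multiset.card_map, Multiset.card_add, card_val, Finset.card_univ,
      Fintype.card_fin] at this
    rw [Multiset.length_sort]
    omega
  obtain ⟨a, b, c, d, habcd⟩ := List.length_eq_four.1 hcard
  have hsorted := Multiset.pairwise_sort L (· ≤ ·)
  have hlow x (hx : x ∈ L.sort) : x ∈ lowCodes := by
    rw [Multiset.mem_sort, Multiset.mem_filter] at hx
    exact List.mem_filter.2 ⟨hwalk x hx.1, decide_eq_true hx.2⟩
  rw [habcd] at hsorted hlow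
  simp only [List.pairwise_cons, List.mem_cons, List.not_mem_nil] at hsorted hlow
  refine ⟨a, b, c, d, hlow a (by simp), hlow b (by simp), hlow c (by simp), hlow d (by simp),
    hsorted.1 b (by simp), hsorted.2.1 c (by simp), hsorted.2.2.1 d (by simp), ?_⟩
  rw [hsplit, ← Multiset.sort_eq L (· ≤ ·), habcd, Multiset.map_coe, Multiset.coe_add]
  rfl

theorem WarpingRules.countP_digit_codes (hM : WarpingRules 3 M) (j : Fin (2*3)) {n : ℕ}
    (hn : n ≤ 3) : (codes M).countP (digit · j = n) = Nat.choose 3 n := by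
  rw [codes, Multiset.countP_map, ← hM.2.1 j n hn, card_def, filter_val]
  simp only [digit_rowCode (hM.entry_le _)]

theorem WarpingRules.countP_altCodes (hM : WarpingRules 3 M) :
    (codes M).countP (· ∈ altCodes) = 2 := by
  obtain ⟨i₀, i₁, k, l, hne, -, h₀, h₁, honly⟩ := hM.2.2.2
  have hfilter : ({i | rowCode (M i) ∈ altCodes} : Finset (Fin (2^3))) = {i₀, i₁} := by
    ext i
    simp only [mem_filter, mem_univ, true_and, mem_insert, mem_singleton,
      rowCode_mem_altCodes_iff (hM.entry_le i)]
    refine ⟨honly i, ?_⟩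
    rintro (rfl | rfl)
    exacts [Or.inl ⟨k, h₀⟩, Or.inr ⟨l, h₁⟩]
  rw [codes, Multiset.countP_map, ← filter_val, ← card_def, hfilter, card_pair hne]

theorem WarpingRules.columnCountsLE_of_codes_eq (hM : WarpingRules 3 M) {l : List ℕ}
    (h : codes M = l) : ColumnCountsLE l := fun j hj n hn => by
  rw [← Multiset.coe_countP, ← h, hM.countP_digit_codes ⟨j, hj⟩ (by omega)]

end Warping3

-- The hypotheses on the partial lists `[a, b]` and `[a, b, c]` only serve to prune the search.
theorem withComplements_mem_orbitCodes :
    ∀ a ∈ lowCodes, ∀ b ∈ lowCodes, a ≤ b → ColumnCountsLE (withComplements [a, b]) →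
    ∀ c ∈ lowCodes, b ≤ c → ColumnCountsLE (withComplements [a, b, c]) →
    ∀ d ∈ lowCodes, c ≤ d → ColumnCountsLE (withComplements [a, b, c, d]) →
    (withComplements [a, b, c, d]).countP (· ∈ altCodes) = 2 →
    (↑(withComplements [a, b, c, d]) : Multiset ℕ) ∈ orbitCodes mat3A ∨
    (↑(withComplements [a, b, c, d]) : Multiset ℕ) ∈ orbitCodes mat3B ∨
    (↑(withComplements [a, b, c, d]) : Multiset ℕ) ∈ orbitCodes mat3C := by
  decide +kernel

theorem WarpingRules.codes_mem_orbitCodes {M : Fin (2^3) → Fin (2*3) → ℕ}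
    (hM : WarpingRules 3 M) :
    codes M ∈ orbitCodes mat3A ∨ codes M ∈ orbitCodes mat3B ∨ codes M ∈ orbitCodes mat3C := by
  obtain ⟨a, b, c, d, ha, hb, hc, hd, hab, hbc, hcd, hcodes⟩ := hM.exists_codes_eq_withComplements
  have hadm := hM.columnCountsLE_of_codes_eq hcodes
  have halt : (withComplements [a, b, c, d]).countP (· ∈ altCodes) = 2 := by
    rw [← Multiset.coe_countP, ← hcodes, hM.countP_altCodes]
  rw [hcodes]
  exact withComplements_mem_orbitCodes a ha b hb hab
    (hadm.mono (withComplements_sublist_append [a, b] [c, d])) c hc hbc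
    (hadm.mono (withComplements_sublist_append [a, b, c] [d])) d hd hcd hadm halt

theorem mat3A_le : ∀ i j, mat3A i j ≤ 3 := by decide

theorem mat3B_le : ∀ i j, mat3B i j ≤ 3 := by decide

theorem mat3C_le : ∀ i j, mat3C i j ≤ 3 := by decide

theorem orbitCodes_disjoint_AB : (orbitCodes mat3A).Disjoint (orbitCodes mat3B) :=
  List.disjoint_left.2 (by decide +kernel)

theorem orbitCodes_disjoint_AC : (orbitCodes mat3A).Disjoint (orbitCodes mat3C) :=
  List.disjoint_left.2 (by decide +kernel)

theorem orbitCodes_disjoint_BC : (orbitCodes mat3B).Disjoint (orbitCodes mat3C) :=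
  List.disjoint_left.2 (by decide +kernel)

/-- Every `8 × 6` matrix satisfying the warping-matrix rules for `c = 3` is equivalent to
exactly one of the three matrices `mat3A`, `mat3B`, `mat3C`. -/
theorem warpingRules_three (M : Fin (2^3) → Fin (2*3) → ℕ) (hM : WarpingRules 3 M) :
    (MatEquiv 3 M mat3A ∧ ¬ MatEquiv 3 M mat3B ∧ ¬ MatEquiv 3 M mat3C) ∨
    (¬ MatEquiv 3 M mat3A ∧ MatEquiv 3 M mat3B ∧ ¬ MatEquiv 3 M mat3C) ∨
    (¬ MatEquiv 3 M mat3A ∧ ¬ MatEquiv 3 M mat3B ∧ MatEquiv 3 M mat3C) := by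
  have hle := hM.entry_le
  rcases hM.codes_mem_orbitCodes with h | h | h
  · exact Or.inl ⟨matEquiv_of_codes_mem_orbitCodes hle mat3A_le h,
      fun e => orbitCodes_disjoint_AB h (codes_mem_orbitCodes_of_matEquiv e),
      fun e => orbitCodes_disjoint_AC h (codes_mem_orbitCodes_of_matEquiv e)⟩
  · exact Or.inr (Or.inl ⟨fun e => orbitCodes_disjoint_AB (codes_mem_orbitCodes_of_matEquiv e) h,
      matEquiv_of_codes_mem_orbitCodes hle mat3B_le h,
      fun e => orbitCodes_disjoint_BC h (codes_mem_orbitCodes_of_matEquiv e)⟩)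
  · exact Or.inr (Or.inr ⟨fun e => orbitCodes_disjoint_AC (codes_mem_orbitCodes_of_matEquiv e) h,
      fun e => orbitCodes_disjoint_BC (codes_mem_orbitCodes_of_matEquiv e) h,
      matEquiv_of_codes_mem_orbitCodes hle mat3C_le h⟩)

end Warping
end
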